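/- arXiv:1602.04750 — 2 statements merged into one kernel-verified Lean document; each statement's English description precedes it below -/
import Mathlib

section
/- The family of exponential functions $\{e^{2\pi i \lambda x} : \lambda \in \mathbb{Z} \cup (\mathbb{Z} + 1/4)\}$ is an orthogonal family in $L^2(\Omega)$ where $\Omega = [0,1] \cup [2,3]$ with Lebesgue measure; i.e., for distinct $\lambda, \lambda'$ in $\mathbb{Z} \cup (\mathbb{Z}+1/4)$, $\int_\Omega e^{2\pi i (\lambda - \lambda') x}\,dx = 0$. -/
open MeasureTheory Real

/-- The exponentials with frequencies in `ℤ ∪ (ℤ + 1/4)` are mutually orthogonal in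
`L²([0,1] ∪ [2,3])`. -/
theorem stmt_0 (Ω : Set ℝ) (hΩ : Ω = Set.Icc (0:ℝ) 1 ∪ Set.Icc (2:ℝ) 3)
    (Λ : Set ℝ)
    (hΛ : Λ = {x : ℝ | ∃ n : ℤ, x = n} ∪ {x : ℝ | ∃ n : ℤ, x = n + 1/4})
    (lam lam' : ℝ) (hlam : lam ∈ Λ) (hlam' : lam' ∈ Λ) (hne : lam ≠ lam') :
    ∫ x in Ω, Complex.exp (2 * Real.pi * Complex.I * (lam - lam') * x) = 0 := by
  subst hΩ hΛ
  set c : ℂ := 2 * Real.pi * Complex.I * ((lam : ℂ) - lam') with hc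
  have hμ : ((lam : ℂ) - lam') ≠ 0 := by
    simpa [sub_eq_zero] using fun h => hne (by exact_mod_cast h)
  have hc0 : c ≠ 0 := by
    refine mul_ne_zero (mul_ne_zero (mul_ne_zero two_ne_zero ?_) Complex.I_ne_zero) hμ
    exact_mod_cast Real.pi_ne_zero
  have hcont : Continuous fun x : ℝ => Complex.exp (c * x) := by continuity
  have hint1 : IntegrableOn (fun x : ℝ => Complex.exp (c * x)) (Set.Icc 0 1) :=
    hcont.integrableOn_Icc
  have hint2 : IntegrableOn (fun x : ℝ => Complex.exp (c * x)) (Set.Icc 2 3) :=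
    hcont.integrableOn_Icc
  have hdisj : Disjoint (Set.Icc (0:ℝ) 1) (Set.Icc (2:ℝ) 3) := by
    rw [Set.disjoint_left]
    rintro x ⟨-, h1⟩ ⟨h2, -⟩; linarith
  have hsplit : (∫ x in (Set.Icc (0:ℝ) 1 ∪ Set.Icc 2 3), Complex.exp (c * x))
      = (∫ x in Set.Icc (0:ℝ) 1, Complex.exp (c * x))
        + ∫ x in Set.Icc (2:ℝ) 3, Complex.exp (c * x) :=
    setIntegral_union hdisj measurableSet_Icc hint1 hint2
  rw [hsplit]
  have hIcc : ∀ a b : ℝ, a ≤ b →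
      (∫ x in Set.Icc a b, Complex.exp (c * x))
        = (Complex.exp (c * b) - Complex.exp (c * a)) / c := by
    intro a b hab
    rw [MeasureTheory.integral_Icc_eq_integral_Ioc, ← intervalIntegral.integral_of_le hab,
      integral_exp_mul_complex hc0]
  rw [hIcc 0 1 (by norm_num), hIcc 2 3 (by norm_num)]
  set E : ℂ := Complex.exp c with hE
  have e0 : Complex.exp (c * 0) = 1 := by rw [mul_zero, Complex.exp_zero]
  have e1 : Complex.exp (c * 1) = E := by rw [mul_one]
  have e2 : Complex.exp (c * 2) = E ^ 2 := by
    rw [show c * 2 = c + c by ring, Complex.exp_add]; ring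
  have e3 : Complex.exp (c * 3) = E ^ 3 := by
    rw [show c * 3 = c + c + c by ring, Complex.exp_add, Complex.exp_add]; ring
  push_cast
  rw [e0, e1, e2, e3]
  have key : E = 1 ∨ E ^ 2 = -1 := by
    have hcase : (∃ k : ℤ, (lam : ℂ) - lam' = k) ∨
        (∃ k : ℤ, (lam : ℂ) - lam' = k + 1/4 ∨ (lam : ℂ) - lam' = k - 1/4) := by
      rcases hlam with ⟨m, hm⟩ | ⟨m, hm⟩ <;> rcases hlam' with ⟨n, hn⟩ | ⟨n, hn⟩ <;>
        subst hm <;> subst hn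
      · exact Or.inl ⟨m - n, by push_cast; ring⟩
      · exact Or.inr ⟨m - n, Or.inr (by push_cast; ring)⟩
      · exact Or.inr ⟨m - n, Or.inl (by push_cast; ring)⟩
      · exact Or.inl ⟨m - n, by push_cast; ring⟩
    rcases hcase with ⟨k, hk⟩ | ⟨k, hk | hk⟩
    · left
      rw [hE, hc, hk, show 2 * (Real.pi : ℂ) * Complex.I * k = k * (2 * Real.pi * Complex.I)
        by ring, Complex.exp_int_mul_two_pi_mul_I]
    · right
      rw [hE, ← Complex.exp_nat_mul, hc, hk,
        show ((2:ℕ) : ℂ) * (2 * Real.pi * Complex.I * ((k : ℂ) + 1/4))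
          = ((2 * k : ℤ) : ℂ) * (2 * Real.pi * Complex.I) + Real.pi * Complex.I by
            push_cast; ring,
        Complex.exp_add, Complex.exp_int_mul_two_pi_mul_I, Complex.exp_pi_mul_I, one_mul]
    · right
      rw [hE, ← Complex.exp_nat_mul, hc, hk,
        show ((2:ℕ) : ℂ) * (2 * Real.pi * Complex.I * ((k : ℂ) - 1/4))
          = ((2 * k - 1 : ℤ) : ℂ) * (2 * Real.pi * Complex.I) + Real.pi * Complex.I by
            push_cast; ring,
        Complex.exp_add, Complex.exp_int_mul_two_pi_mul_I, Complex.exp_pi_mul_I, one_mul]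
  field_simp
  rcases key with h | h
  · rw [h]; ring
  · linear_combination (E - 1) * h
end

section
/- Let $N = MK + \alpha$ with $M,K$ positive integers and $0 \le \alpha < M$, $B = \{0,K,\ldots,(M-1)K\}$, $L = \{0,\ldots,M-1\}$, and $\mathcal{F} = \frac{1}{\sqrt{M}}[e^{2\pi i b\lambda/N}]_{\lambda\in L, b\in B}$. Set $\epsilon = \frac{2\pi\alpha\sqrt{M}}{K}$. Then for all $\mathbf{w} \in \mathbb{C}^M$: $(1-\epsilon)\|\mathbf{w}\| \leq \|\mathcal{F}\mathbf{w}\| \leq (1+\epsilon)\|\mathbf{w}\|$. -/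
open Complex

lemma aux_exp_sub_one (t : ℝ) : ‖Complex.exp (t * I) - 1‖ ≤ |t| := by
  have h : Complex.exp (t * I) - 1 = ((Real.cos t - 1 : ℝ) : ℂ) + ((Real.sin t : ℝ) : ℂ) * I := by
    rw [Complex.exp_mul_I]; push_cast; ring
  rw [h, Complex.norm_def, Complex.normSq_add_mul_I]
  have h2 : (Real.cos t - 1) ^ 2 + Real.sin t ^ 2 = 2 - 2 * Real.cos t := by
    have hpy := Real.sin_sq_add_cos_sq t
    nlinarith
  rw [h2]
  have hb : 2 - 2 * Real.cos t ≤ t ^ 2 := by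
    have := Real.one_sub_sq_div_two_le_cos (x := t)
    nlinarith
  calc Real.sqrt (2 - 2 * Real.cos t) ≤ Real.sqrt (t ^ 2) := Real.sqrt_le_sqrt hb
    _ = |t| := Real.sqrt_sq_eq_abs t

lemma aux_exp_sub_exp (x y : ℝ) :
    ‖Complex.exp (x * I) - Complex.exp (y * I)‖ ≤ |x - y| := by
  have h : Complex.exp (x * I) - Complex.exp (y * I)
      = Complex.exp (y * I) * (Complex.exp ((x - y : ℝ) * I) - 1) := by
    rw [mul_sub, ← Complex.exp_add, mul_one]
    push_cast; ring_nf
  rw [h, norm_mul, Complex.norm_exp_ofReal_mul_I, one_mul]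
  exact aux_exp_sub_one _
open Matrix

lemma aux_frob {M : ℕ} (A : Matrix (Fin M) (Fin M) ℂ) (w : EuclideanSpace ℂ (Fin M)) (C : ℝ)
    (hC : 0 ≤ C) (hA : ∀ i j, ‖A i j‖ ≤ C) :
    ‖toEuclideanCLM (𝕜 := ℂ) A w‖ ≤ (M * C) * ‖w‖ := by
  have happly : ∀ i, (toEuclideanCLM (𝕜 := ℂ) A w) i = ∑ j, A i j * w j := fun i => rfl
  have hw2 : ∑ j, ‖w j‖ ^ 2 = ‖w‖ ^ 2 := by
    rw [EuclideanSpace.norm_eq, Real.sq_sqrt (by positivity)]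
  have hrow : ∀ i, ‖(toEuclideanCLM (𝕜 := ℂ) A w) i‖ ^ 2 ≤ (M * C ^ 2) * ‖w‖ ^ 2 := by
    intro i
    have h1 : ‖(toEuclideanCLM (𝕜 := ℂ) A w) i‖ ≤ ∑ j, ‖A i j‖ * ‖w j‖ := by
      rw [happly i]
      refine (norm_sum_le _ _).trans_eq ?_
      simp [norm_mul]
    have h2 : (∑ j, ‖A i j‖ * ‖w j‖) ^ 2 ≤ (∑ j, ‖A i j‖ ^ 2) * ∑ j, ‖w j‖ ^ 2 :=
      Finset.sum_mul_sq_le_sq_mul_sq _ _ _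
    have h3 : (∑ j : Fin M, ‖A i j‖ ^ 2) ≤ M * C ^ 2 := by
      calc (∑ j : Fin M, ‖A i j‖ ^ 2) ≤ ∑ j : Fin M, C ^ 2 :=
            Finset.sum_le_sum fun j _ => pow_le_pow_left₀ (norm_nonneg _) (hA i j) 2
        _ = M * C ^ 2 := by simp [mul_comm]
    calc ‖(toEuclideanCLM (𝕜 := ℂ) A w) i‖ ^ 2 ≤ (∑ j, ‖A i j‖ * ‖w j‖) ^ 2 := by
          apply pow_le_pow_left₀ (norm_nonneg _) h1
      _ ≤ (∑ j, ‖A i j‖ ^ 2) * ∑ j, ‖w j‖ ^ 2 := h2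
      _ ≤ (M * C ^ 2) * ‖w‖ ^ 2 := by
          rw [hw2]
          exact mul_le_mul_of_nonneg_right h3 (by positivity)
  have hsq : ‖toEuclideanCLM (𝕜 := ℂ) A w‖ ^ 2 ≤ (M * C * ‖w‖) ^ 2 := by
    rw [EuclideanSpace.norm_eq, Real.sq_sqrt (by positivity)]
    calc (∑ i, ‖(toEuclideanCLM (𝕜 := ℂ) A w) i‖ ^ 2) ≤ ∑ i : Fin M, (M * C ^ 2) * ‖w‖ ^ 2 :=
          Finset.sum_le_sum fun i _ => hrow i
      _ = M * ((M * C ^ 2) * ‖w‖ ^ 2) := by simp [mul_comm]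
      _ = (M * C * ‖w‖) ^ 2 := by ring
  exact pow_le_pow_iff_left₀ (norm_nonneg _) (by positivity) two_ne_zero |>.mp hsq
open Matrix Complex

lemma aux_dft_unitary (M : ℕ) (hM : 0 < M) (H : Matrix (Fin M) (Fin M) ℂ)
    (hH : H = fun lam b : Fin M => ((1 / Real.sqrt M : ℝ) : ℂ) *
      Complex.exp (2 * Real.pi * I * (((b : ℕ) : ℝ) * ((lam : ℕ) : ℝ) / M))) :
    Hᴴ * H = 1 := by
  ext b b'
  simp only [Matrix.mul_apply, Matrix.conjTranspose_apply, Matrix.one_apply, Complex.star_def]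
  simp only [hH]
  have hM0 : (M : ℂ) ≠ 0 := by exact_mod_cast hM.ne'
  have hc : ∀ lam : Fin M,
      (starRingEnd ℂ) (((1 / Real.sqrt M : ℝ) : ℂ) *
        Complex.exp (2 * Real.pi * I * (((b : ℕ) : ℝ) * ((lam : ℕ) : ℝ) / M))) *
      (((1 / Real.sqrt M : ℝ) : ℂ) *
        Complex.exp (2 * Real.pi * I * (((b' : ℕ) : ℝ) * ((lam : ℕ) : ℝ) / M)))
      = (1 / (M : ℂ)) * Complex.exp (2 * Real.pi * I *
          ((((b' : ℤ) - (b : ℤ) : ℤ) : ℂ) / M))^(lam : ℕ) := by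
    intro lam
    rw [_root_.map_mul, ← Complex.exp_conj]
    have hconj : (starRingEnd ℂ) (2 * Real.pi * I * (((b : ℕ) : ℝ) * ((lam : ℕ) : ℝ) / M))
        = -(2 * Real.pi * I * (((b : ℕ) : ℝ) * ((lam : ℕ) : ℝ) / M)) := by
      simp only [_root_.map_mul, map_div₀, map_ofNat, Complex.conj_I, Complex.conj_ofReal,
        map_natCast]
      ring
    rw [hconj, Complex.conj_ofReal, ← Complex.exp_nat_mul]
    rw [mul_mul_mul_comm, ← Complex.exp_add]
    congr 1
    · rw [← Complex.ofReal_mul]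
      rw [div_mul_div_comm, one_mul, Real.mul_self_sqrt (Nat.cast_nonneg M)]
      push_cast
      norm_num
    · congr 1
      push_cast
      field_simp
      ring
  rw [Finset.sum_congr rfl (fun lam _ => hc lam), ← Finset.mul_sum]
  set z : ℂ := Complex.exp (2 * Real.pi * I * ((((b' : ℤ) - (b : ℤ) : ℤ) : ℂ) / M)) with hz
  have hsum : ∑ lam : Fin M, z ^ (lam : ℕ) = ∑ i ∈ Finset.range M, z ^ i :=
    Finset.sum_bij (fun a _ => (a : ℕ)) (fun a _ => Finset.mem_range.mpr a.2)
      (fun a _ a' _ h => Fin.ext h) (fun i hi => ⟨⟨i, Finset.mem_range.mp hi⟩, by simp, rfl⟩)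
      (fun _ _ => rfl)
  rw [hsum]
  set d : ℤ := (b' : ℤ) - (b : ℤ) with hdd
  have hzM : z ^ M = 1 := by
    rw [hz, ← Complex.exp_nat_mul]
    have : (M : ℂ) * (2 * Real.pi * I * ((d : ℂ) / M)) = (d : ℂ) * (2 * Real.pi * I) := by
      field_simp
    rw [this, Complex.exp_int_mul_two_pi_mul_I]
  by_cases hbb : b = b'
  · subst hbb
    simp only [if_pos rfl]
    have : d = 0 := by omega
    rw [hz, this]
    norm_num
    field_simp
  · rw [if_neg hbb]
    have hd0 : d ≠ 0 := by
      intro h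
      apply hbb
      have : (b : ℤ) = (b' : ℤ) := by omega
      exact Fin.ext (by exact_mod_cast this)
    have hdlt : d.natAbs < M := by
      have := b.2; have := b'.2; omega
    have hz1 : z ≠ 1 := by
      intro h
      rw [hz, Complex.exp_eq_one_iff] at h
      obtain ⟨n, hn⟩ := h
      have h2 : (d : ℂ) = n * M := by
        have hpi : (2 * Real.pi * Complex.I : ℂ) ≠ 0 := by
          simp [Complex.ext_iff, Real.pi_ne_zero]
        field_simp at hn
        have hn' : (2 * (Real.pi:ℂ) * Complex.I) * (d:ℂ)
            = (2 * (Real.pi:ℂ) * Complex.I) * ((n:ℂ) * M) := by linear_combination (2 * (Real.pi:ℂ) * Complex.I) * hn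
        exact mul_left_cancel₀ hpi hn'
      have h3 : d = n * M := by exact_mod_cast h2
      have : d.natAbs ≥ M ∨ d = 0 := by
        rcases eq_or_ne n 0 with h | h
        · right; simp [h3, h]
        · left
          have : d.natAbs = n.natAbs * M := by rw [h3]; simp [Int.natAbs_mul]
          have hn1 : 1 ≤ n.natAbs := Int.one_le_abs (by exact_mod_cast h) |>.trans_eq (Int.abs_eq_natAbs n) |> fun _ => Nat.one_le_iff_ne_zero.mpr (Int.natAbs_ne_zero.mpr h)
          nlinarith [this]
      omega
    rw [geom_sum_eq hz1, hzM]
    simp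
open scoped InnerProductSpace

lemma aux_isometry {M : ℕ} (H : Matrix (Fin M) (Fin M) ℂ) (h : Hᴴ * H = 1)
    (w : EuclideanSpace ℂ (Fin M)) : ‖toEuclideanCLM (𝕜 := ℂ) H w‖ = ‖w‖ := by
  set U := toEuclideanCLM (𝕜 := ℂ) H with hU
  have h1 : star U * U = 1 := by
    rw [hU, ← map_star, ← _root_.map_mul, Matrix.star_eq_conjTranspose, h, _root_.map_one]
  have h2 : ⟪U w, U w⟫_ℂ = ⟪w, w⟫_ℂ := by
    rw [← ContinuousLinearMap.adjoint_inner_left, ← ContinuousLinearMap.star_eq_adjoint]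
    have : star U (U w) = (star U * U) w := rfl
    rw [this, h1]
    rfl
  have h4 : ‖U w‖ ^ 2 = ‖w‖ ^ 2 := by
    rw [InnerProductSpace.norm_sq_eq_re_inner (𝕜 := ℂ), InnerProductSpace.norm_sq_eq_re_inner (𝕜 := ℂ), h2]
  nlinarith [norm_nonneg (U w), norm_nonneg w]
open Matrix

set_option maxHeartbeats 1000000 in
/-- With `N = MK + α`, `0 ≤ α < M`, `B = {0, K, …, (M-1)K}`, `L = {0, …, M-1}`,
`𝓕 = (1/√M)[e^{2πibλ/N}]` and `ε = 2πα√M/K`, one has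
`(1-ε)‖w‖ ≤ ‖𝓕w‖ ≤ (1+ε)‖w‖` for all `w ∈ ℂ^M` (Euclidean norm). -/
theorem stmt_8 (M K α : ℕ) (hM : 0 < M) (hK : 0 < K) (hα : α < M)
    (N : ℕ) (hN : N = M * K + α)
    (F : Matrix (Fin M) (Fin M) ℂ)
    (hF : F = fun (lam b : Fin M) => (1 / Real.sqrt M : ℝ) *
      Complex.exp (2 * Real.pi * Complex.I * (((b : ℕ) * K : ℝ) * (lam : ℕ) / N)))
    (ε : ℝ) (hε : ε = 2 * Real.pi * α * Real.sqrt M / K) :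
    ∀ w : EuclideanSpace ℂ (Fin M),
      (1 - ε) * ‖w‖ ≤ ‖Matrix.toEuclideanCLM (𝕜 := ℂ) F w‖ ∧
      ‖Matrix.toEuclideanCLM (𝕜 := ℂ) F w‖ ≤ (1 + ε) * ‖w‖ := by
  intro w
  set s := Real.sqrt M with hs
  have hs0 : 0 < s := Real.sqrt_pos.mpr (by exact_mod_cast hM)
  have hss : s * s = (M : ℝ) := Real.mul_self_sqrt (Nat.cast_nonneg M)
  have hN0 : 0 < N := by rw [hN]; have := Nat.mul_pos hM hK; omega
  have hNr : (N : ℝ) = (M : ℝ) * K + α := by rw [hN]; push_cast; ring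
  have hπ := Real.pi_pos
  set H : Matrix (Fin M) (Fin M) ℂ := fun lam b : Fin M =>
    ((1 / Real.sqrt M : ℝ) : ℂ) *
      Complex.exp (2 * Real.pi * Complex.I * (((b : ℕ) : ℝ) * ((lam : ℕ) : ℝ) / M)) with hH
  have hHU : Hᴴ * H = 1 := aux_dft_unitary M hM H hH
  have hHiso : ∀ v : EuclideanSpace ℂ (Fin M), ‖toEuclideanCLM (𝕜 := ℂ) H v‖ = ‖v‖ :=
    fun v => aux_isometry H hHU v
  set C : ℝ := (1 / s) * (2 * Real.pi * α * M / N) with hC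
  have hC0 : 0 ≤ C := by positivity
  -- entrywise bound on F - H
  have hentry : ∀ lam b : Fin M, ‖(F - H) lam b‖ ≤ C := by
    intro lam b
    have hb : ((b : ℕ) : ℝ) ≤ M := by exact_mod_cast (le_of_lt b.2)
    have hlam : ((lam : ℕ) : ℝ) ≤ M := by exact_mod_cast (le_of_lt lam.2)
    have hb0 : (0:ℝ) ≤ ((b : ℕ) : ℝ) := Nat.cast_nonneg _
    have hlam0 : (0:ℝ) ≤ ((lam : ℕ) : ℝ) := Nat.cast_nonneg _
    set X : ℝ := 2 * Real.pi * (((b : ℕ) : ℝ) * K * ((lam : ℕ) : ℝ) / N) with hX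
    set Y : ℝ := 2 * Real.pi * (((b : ℕ) : ℝ) * ((lam : ℕ) : ℝ) / M) with hY
    have hsub : (F - H) lam b = ((1 / Real.sqrt M : ℝ) : ℂ) *
        (Complex.exp ((X : ℝ) * Complex.I) - Complex.exp ((Y : ℝ) * Complex.I)) := by
      rw [Matrix.sub_apply, hF, hH]
      simp only
      rw [← mul_sub]
      congr 2
      · push_cast [hX]; ring
      · push_cast [hY]; ring
    rw [hsub, norm_mul, Complex.norm_real, Real.norm_eq_abs,
      _root_.abs_of_nonneg (by positivity : (0:ℝ) ≤ 1 / Real.sqrt M)]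
    have h1 : ‖Complex.exp ((X : ℝ) * Complex.I) - Complex.exp ((Y : ℝ) * Complex.I)‖ ≤ |X - Y| :=
      aux_exp_sub_exp X Y
    have hD : X - Y = -(2 * Real.pi * α * (((b : ℕ) : ℝ) * ((lam : ℕ) : ℝ)) / (N * M)) := by
      rw [hX, hY]
      have hMr : (0:ℝ) < M := by exact_mod_cast hM
      field_simp
      rw [hNr]; ring
    have h2 : |X - Y| ≤ 2 * Real.pi * α * M / N := by
      rw [hD, abs_neg, _root_.abs_of_nonneg (by positivity)]
      rw [div_le_div_iff₀ (by positivity) (by positivity)]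
      have : ((b : ℕ) : ℝ) * ((lam : ℕ) : ℝ) ≤ (M : ℝ) * M := by
        exact mul_le_mul hb hlam hlam0 (Nat.cast_nonneg _)
      nlinarith [mul_le_mul_of_nonneg_left this
        (show (0:ℝ) ≤ 2 * Real.pi * (α:ℝ) * N by positivity)]
    calc (1 / Real.sqrt M) * ‖Complex.exp ((X : ℝ) * Complex.I) - Complex.exp ((Y : ℝ) * Complex.I)‖
        ≤ (1 / s) * (2 * Real.pi * α * M / N) := by
          apply mul_le_mul (le_of_eq (by rw [hs])) (h1.trans h2) (norm_nonneg _) (by positivity)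
      _ = C := hC.symm
  have hFH : ∀ v : EuclideanSpace ℂ (Fin M),
      ‖toEuclideanCLM (𝕜 := ℂ) (F - H) v‖ ≤ ((M : ℝ) * C) * ‖v‖ :=
    fun v => aux_frob (F - H) v C hC0 hentry
  have hMCε : (M : ℝ) * C ≤ ε := by
    rw [hε, hC]
    rw [show (M:ℝ) * ((1 / s) * (2 * Real.pi * α * M / N)) = 2 * Real.pi * α * M * M / (N * s) by
      field_simp]
    rw [div_le_div_iff₀ (by positivity) (by positivity)]
    have hMK : (M : ℝ) * K ≤ N := by rw [hNr]; nlinarith [Nat.cast_nonneg (α := ℝ) α]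
    calc 2 * Real.pi * (α:ℝ) * M * M * K = (2 * Real.pi * α * M) * ((M:ℝ) * K) := by ring
      _ ≤ (2 * Real.pi * (α:ℝ) * M) * N := mul_le_mul_of_nonneg_left hMK (by positivity)
      _ = 2 * Real.pi * (α:ℝ) * s * ((N:ℝ) * s) := by rw [← hss]; ring
  have hdiff : ‖toEuclideanCLM (𝕜 := ℂ) (F - H) w‖ ≤ ε * ‖w‖ :=
    (hFH w).trans (mul_le_mul_of_nonneg_right hMCε (norm_nonneg _))
  have hsplit : toEuclideanCLM (𝕜 := ℂ) F w
      = toEuclideanCLM (𝕜 := ℂ) H w + toEuclideanCLM (𝕜 := ℂ) (F - H) w := by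
    have h : F = H + (F - H) := by abel
    conv_lhs => rw [h]
    rw [_root_.map_add, ContinuousLinearMap.add_apply]
  constructor
  · have h1 : ‖w‖ ≤ ‖toEuclideanCLM (𝕜 := ℂ) F w‖ + ‖toEuclideanCLM (𝕜 := ℂ) (F - H) w‖ := by
      rw [← hHiso w]
      calc ‖toEuclideanCLM (𝕜 := ℂ) H w‖
          = ‖toEuclideanCLM (𝕜 := ℂ) F w - toEuclideanCLM (𝕜 := ℂ) (F - H) w‖ := by
            have h5 : toEuclideanCLM (𝕜 := ℂ) H w
                = toEuclideanCLM (𝕜 := ℂ) F w - toEuclideanCLM (𝕜 := ℂ) (F - H) w := by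
              rw [hsplit]; abel
            rw [h5]
        _ ≤ _ := norm_sub_le _ _
    linarith [hdiff]
  · calc ‖toEuclideanCLM (𝕜 := ℂ) F w‖
        ≤ ‖toEuclideanCLM (𝕜 := ℂ) H w‖ + ‖toEuclideanCLM (𝕜 := ℂ) (F - H) w‖ := by
          rw [hsplit]; exact norm_add_le _ _
      _ ≤ ‖w‖ + ε * ‖w‖ := by rw [hHiso w]; linarith [hdiff]
      _ = (1 + ε) * ‖w‖ := by ring
end
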